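/- arXiv:1605.06302 — 8 statements merged into one kernel-verified Lean document; each statement's English description precedes it below -/
import Mathlib

section
/- Let (S, Δ, P) be a probability space, let (α,β) be an (α,β)-pair, let 0 < γ₁ ≤ 1 and 0 < γ₂ ≤ 1, and let {X_n} be a sequence of real-valued random variables on S. If X_n →^{PS_{αβ}^{γ₁}} X and X_n →^{PS_{αβ}^{γ₂}} Y, then P(X = Y) = 1. -/
open MeasureTheory Filter Set

/-- An (α,β)-pair: two non-decreasing sequences of positive reals with
`a n ≤ b n` for all `n` and `b n - a n → ∞`. -/
def ABPair (a b : ℕ → ℝ) : Prop :=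
  Monotone a ∧ Monotone b ∧ (∀ n, 0 < a n) ∧ (∀ n, a n ≤ b n) ∧
    Tendsto (fun n => b n - a n) atTop atTop

/-- The set of natural indices `k ∈ [a n, b n]` satisfying a predicate `p`. -/
def abIdx (a b : ℕ → ℝ) (n : ℕ) (p : ℕ → Prop) : Set ℕ :=
  {k : ℕ | a n ≤ (k : ℝ) ∧ (k : ℝ) ≤ b n ∧ p k}

/-- αβ-statistical convergence of order γ of a real sequence `x` to `l`. -/
def ABStatConv (a b : ℕ → ℝ) (γ : ℝ) (x : ℕ → ℝ) (l : ℝ) : Prop :=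
  ∀ ε > 0,
    Tendsto (fun n => ((abIdx a b n fun k => ε ≤ |x k - l|).ncard : ℝ) / (b n - a n + 1) ^ γ)
      atTop (nhds 0)

/-- αβ-statistical convergence of order γ in probability of the sequence of random
variables `X` to the random variable `L`, w.r.t. the probability measure `P`. -/
def PSConv {Ω : Type*} [MeasurableSpace Ω] (P : Measure Ω)
    (a b : ℕ → ℝ) (γ : ℝ) (X : ℕ → Ω → ℝ) (L : Ω → ℝ) : Prop :=
  ∀ ε > 0, ∀ δ > 0,
    Tendsto (fun n =>
      ((abIdx a b n fun k => δ ≤ (P {ω | ε ≤ |X k ω - L ω|}).toReal).ncard : ℝ)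
        / (b n - a n + 1) ^ γ) atTop (nhds 0)

/-- αβ-strong p-Cesàro summability of order γ in probability. -/
def PWConv {Ω : Type*} [MeasurableSpace Ω] (P : Measure Ω)
    (a b : ℕ → ℝ) (γ p : ℝ) (X : ℕ → Ω → ℝ) (L : Ω → ℝ) : Prop :=
  ∀ ε > 0,
    Tendsto (fun n =>
      (∑ k ∈ Finset.Icc ⌈a n⌉₊ ⌊b n⌋₊, ((P {ω | ε ≤ |X k ω - L ω|}).toReal) ^ p)
        / (b n - a n + 1) ^ γ) atTop (nhds 0)

/-- αβ-statistical convergence of order γ in r-th expectation. -/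
def ESConv {Ω : Type*} [MeasurableSpace Ω] (P : Measure Ω)
    (a b : ℕ → ℝ) (γ r : ℝ) (X : ℕ → Ω → ℝ) (L : Ω → ℝ) : Prop :=
  ∀ ε > 0,
    Tendsto (fun n =>
      ((abIdx a b n fun k => ε ≤ ∫ ω, |X k ω - L ω| ^ r ∂P).ncard : ℝ)
        / (b n - a n + 1) ^ γ) atTop (nhds 0)

/-- αβ-statistical convergence of order γ in distribution: the distribution functions
converge αβ-statistically of order γ at every continuity point of the limit d.f. -/
def DSConv {Ω : Type*} [MeasurableSpace Ω] (P : Measure Ω)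
    (a b : ℕ → ℝ) (γ : ℝ) (X : ℕ → Ω → ℝ) (L : Ω → ℝ) : Prop :=
  ∀ x : ℝ, ContinuousAt (fun t => (P {ω | L ω ≤ t}).toReal) x →
    ABStatConv a b γ (fun n => (P {ω | X n ω ≤ x}).toReal) ((P {ω | L ω ≤ x}).toReal)

/-- `K ⊆ ℕ` has αβ-density of order γ zero. -/
def ABDensityZero (a b : ℕ → ℝ) (γ : ℝ) (K : Set ℕ) : Prop :=
  Tendsto (fun n => ((abIdx a b n fun k => k ∈ K).ncard : ℝ) / (b n - a n + 1) ^ γ)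
    atTop (nhds 0)

/-- αβ-statistical limit superior of order γ of a real sequence. -/
noncomputable def abStatLimsup (a b : ℕ → ℝ) (γ : ℝ) (x : ℕ → ℝ) : ℝ :=
  sSup {t : ℝ | ¬ ABDensityZero a b γ {k | t < x k}}

/-- αβ-statistical limit inferior of order γ of a real sequence. -/
noncomputable def abStatLiminf (a b : ℕ → ℝ) (γ : ℝ) (x : ℕ → ℝ) : ℝ :=
  sInf {t : ℝ | ¬ ABDensityZero a b γ {k | x k < t}}
lemma abIdx_subset_Icc (a b : ℕ → ℝ) (n : ℕ) (p : ℕ → Prop) :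
    abIdx a b n p ⊆ ↑(Finset.Icc ⌈a n⌉₊ ⌊b n⌋₊) := by
  intro k hk
  obtain ⟨h1, h2, _⟩ := hk
  simp only [Finset.coe_Icc, Set.mem_Icc]
  exact ⟨Nat.ceil_le.mpr h1, Nat.le_floor h2⟩

lemma exists_not_mem (a b : ℕ → ℝ) (hab : ABPair a b)
    (γ₁ γ₂ : ℝ) (hγ₁1 : γ₁ ≤ 1) (hγ₂1 : γ₂ ≤ 1)
    (p q : ℕ → Prop)
    (hp : Tendsto (fun n => ((abIdx a b n p).ncard : ℝ) / (b n - a n + 1) ^ γ₁)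
      atTop (nhds 0))
    (hq : Tendsto (fun n => ((abIdx a b n q).ncard : ℝ) / (b n - a n + 1) ^ γ₂)
      atTop (nhds 0)) :
    ∃ k, ¬ p k ∧ ¬ q k := by
  obtain ⟨hma, hmb, hapos, hle, htend⟩ := hab
  have h3 : ∀ᶠ n in atTop, (3:ℝ) ≤ b n - a n := htend.eventually_ge_atTop 3
  have hp6 : ∀ᶠ n in atTop,
      ((abIdx a b n p).ncard : ℝ) / (b n - a n + 1) ^ γ₁ < 1/6 :=
    hp.eventually_lt_const (by norm_num)
  have hq6 : ∀ᶠ n in atTop,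
      ((abIdx a b n q).ncard : ℝ) / (b n - a n + 1) ^ γ₂ < 1/6 :=
    hq.eventually_lt_const (by norm_num)
  obtain ⟨n, hn3, hnp, hnq⟩ := (h3.and (hp6.and hq6)).exists
  set d : ℝ := b n - a n + 1 with hd
  have hd4 : (4:ℝ) ≤ d := by simp only [hd]; linarith
  have hd1 : (1:ℝ) ≤ d := by linarith
  have hdpos : (0:ℝ) < d := by linarith
  have hpow : ∀ γ : ℝ, γ ≤ 1 → d ^ γ ≤ d := by
    intro γ hγ
    calc d ^ γ ≤ d ^ (1:ℝ) := Real.rpow_le_rpow_of_exponent_le hd1 hγ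
    _ = d := Real.rpow_one d
  have hpowpos : ∀ γ : ℝ, (0:ℝ) < d ^ γ := fun γ => Real.rpow_pos_of_pos hdpos γ
  have hcA : ((abIdx a b n p).ncard : ℝ) < d / 6 := by
    have := (div_lt_iff₀ (hpowpos γ₁)).mp hnp
    calc ((abIdx a b n p).ncard : ℝ) < 1/6 * d ^ γ₁ := this
    _ ≤ 1/6 * d := by nlinarith [hpow γ₁ hγ₁1]
    _ = d / 6 := by ring
  have hcB : ((abIdx a b n q).ncard : ℝ) < d / 6 := by
    have := (div_lt_iff₀ (hpowpos γ₂)).mp hnq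
    calc ((abIdx a b n q).ncard : ℝ) < 1/6 * d ^ γ₂ := this
    _ ≤ 1/6 * d := by nlinarith [hpow γ₂ hγ₂1]
    _ = d / 6 := by ring
  -- the interval of naturals
  set I : Finset ℕ := Finset.Icc ⌈a n⌉₊ ⌊b n⌋₊ with hI
  have ha0 : (0:ℝ) ≤ a n := (hapos n).le
  have hb0 : (0:ℝ) ≤ b n := ha0.trans (hle n)
  have hceil : (⌈a n⌉₊ : ℝ) < a n + 1 := Nat.ceil_lt_add_one ha0
  have hfloor : b n - 1 < (⌊b n⌋₊ : ℝ) := Nat.sub_one_lt_floor (b n)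
  have hcf : ⌈a n⌉₊ ≤ ⌊b n⌋₊ := by
    have : (⌈a n⌉₊ : ℝ) < (⌊b n⌋₊ : ℝ) := by linarith
    exact_mod_cast this.le
  have hcard : (d - 2 : ℝ) ≤ (I.card : ℝ) := by
    have : I.card = ⌊b n⌋₊ + 1 - ⌈a n⌉₊ := Nat.card_Icc _ _
    have hcast : (I.card : ℝ) = (⌊b n⌋₊ : ℝ) + 1 - (⌈a n⌉₊ : ℝ) := by
      rw [this]
      push_cast [Nat.succ_le_of_lt (Nat.lt_succ_of_le hcf)]
      rw [Nat.cast_sub (by omega)]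
      push_cast; ring
    rw [hcast, hd]; linarith
  by_contra hcon
  push_neg at hcon
  -- then every k in I is in abIdx p or abIdx q
  have hsub : (↑I : Set ℕ) ⊆ abIdx a b n p ∪ abIdx a b n q := by
    intro k hk
    simp only [hI, Finset.coe_Icc, Set.mem_Icc] at hk
    have hak : a n ≤ (k:ℝ) := Nat.ceil_le.mp hk.1
    have hkb : (k:ℝ) ≤ b n := (Nat.le_floor_iff hb0).mp hk.2
    rcases Classical.em (p k) with hpk | hpk
    · exact Or.inl ⟨hak, hkb, hpk⟩
    · exact Or.inr ⟨hak, hkb, hcon k hpk⟩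
  have hAfin : (abIdx a b n p).Finite := I.finite_toSet.subset (abIdx_subset_Icc a b n p)
  have hBfin : (abIdx a b n q).Finite := I.finite_toSet.subset (abIdx_subset_Icc a b n q)
  have hle1 : (I.card : ℝ) ≤ ((abIdx a b n p).ncard : ℝ) + ((abIdx a b n q).ncard : ℝ) := by
    have h1 : (↑I : Set ℕ).ncard ≤ (abIdx a b n p ∪ abIdx a b n q).ncard :=
      Set.ncard_le_ncard hsub (hAfin.union hBfin)
    have h2 : (abIdx a b n p ∪ abIdx a b n q).ncard ≤
        (abIdx a b n p).ncard + (abIdx a b n q).ncard := Set.ncard_union_le _ _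
    have h3 : (↑I : Set ℕ).ncard = I.card := Set.ncard_coe_finset I
    exact_mod_cast (h3 ▸ h1).trans h2
  linarith

/-- Theorem 2.2(i): uniqueness of the αβ-statistical limit in probability. -/
theorem PSConv_limit_unique {Ω : Type*} [MeasurableSpace Ω]
    (P : Measure Ω) [IsProbabilityMeasure P]
    (a b : ℕ → ℝ) (hab : ABPair a b)
    (γ₁ γ₂ : ℝ) (hγ₁0 : 0 < γ₁) (hγ₁1 : γ₁ ≤ 1) (hγ₂0 : 0 < γ₂) (hγ₂1 : γ₂ ≤ 1)
    (X : ℕ → Ω → ℝ) (Y Z : Ω → ℝ)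
    (hX : ∀ n, Measurable (X n)) (hY : Measurable Y) (hZ : Measurable Z)
    (h1 : PSConv P a b γ₁ X Y) (h2 : PSConv P a b γ₂ X Z) :
    P {ω | Y ω = Z ω} = 1 := by
  have key : ∀ ε : ℝ, 0 < ε → P {ω | ε ≤ |Y ω - Z ω|} = 0 := by
    intro ε hε
    have hδ : ∀ δ : ℝ, 0 < δ → (P {ω | ε ≤ |Y ω - Z ω|}).toReal ≤ δ := by
      intro δ hδ
      obtain ⟨k, hk1, hk2⟩ := exists_not_mem a b hab γ₁ γ₂ hγ₁1 hγ₂1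
        (fun k => δ/2 ≤ (P {ω | ε/2 ≤ |X k ω - Y ω|}).toReal)
        (fun k => δ/2 ≤ (P {ω | ε/2 ≤ |X k ω - Z ω|}).toReal)
        (h1 (ε/2) (by linarith) (δ/2) (by linarith))
        (h2 (ε/2) (by linarith) (δ/2) (by linarith))
      push_neg at hk1 hk2
      have hincl : {ω | ε ≤ |Y ω - Z ω|} ⊆
          {ω | ε/2 ≤ |X k ω - Y ω|} ∪ {ω | ε/2 ≤ |X k ω - Z ω|} := by
        intro ω hω
        simp only [Set.mem_setOf_eq] at hω
        by_contra hc
        simp only [Set.mem_union, Set.mem_setOf_eq, not_or, not_le] at hc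
        have : |Y ω - Z ω| ≤ |X k ω - Y ω| + |X k ω - Z ω| := by
          have := abs_sub (X k ω - Z ω) (X k ω - Y ω)
          calc |Y ω - Z ω| = |(X k ω - Z ω) - (X k ω - Y ω)| := by ring_nf
          _ ≤ |X k ω - Z ω| + |X k ω - Y ω| := abs_sub _ _
          _ = |X k ω - Y ω| + |X k ω - Z ω| := by ring
        linarith [hc.1, hc.2]
      have hm : P {ω | ε ≤ |Y ω - Z ω|} ≤
          P {ω | ε/2 ≤ |X k ω - Y ω|} + P {ω | ε/2 ≤ |X k ω - Z ω|} :=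
        (measure_mono hincl).trans (measure_union_le _ _)
      have htr : (P {ω | ε ≤ |Y ω - Z ω|}).toReal ≤
          (P {ω | ε/2 ≤ |X k ω - Y ω|}).toReal + (P {ω | ε/2 ≤ |X k ω - Z ω|}).toReal := by
        rw [← ENNReal.toReal_add (measure_ne_top P _) (measure_ne_top P _)]
        exact ENNReal.toReal_mono
          (ENNReal.add_ne_top.mpr ⟨measure_ne_top P _, measure_ne_top P _⟩) hm
      linarith
    have h0 : (P {ω | ε ≤ |Y ω - Z ω|}).toReal = 0 := by
      have hle0 : (P {ω | ε ≤ |Y ω - Z ω|}).toReal ≤ 0 :=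
        le_of_forall_pos_le_add (fun δ hδp => by simpa using hδ δ hδp)
      exact le_antisymm hle0 ENNReal.toReal_nonneg
    rcases (ENNReal.toReal_eq_zero_iff _).mp h0 with h | h
    · exact h
    · exact absurd h (measure_ne_top P _)
  have hnull : P {ω | Y ω ≠ Z ω} = 0 := by
    have hsub : {ω | Y ω ≠ Z ω} ⊆ ⋃ m : ℕ, {ω | 1/(m+1) ≤ |Y ω - Z ω|} := by
      intro ω hω
      have habs : 0 < |Y ω - Z ω| := abs_pos.mpr (sub_ne_zero.mpr hω)
      obtain ⟨m, hm⟩ := exists_nat_one_div_lt habs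
      exact Set.mem_iUnion.mpr ⟨m, hm.le⟩
    refine measure_mono_null hsub (measure_iUnion_null fun m => key _ ?_)
    positivity
  have hms : MeasurableSet {ω | Y ω ≠ Z ω} :=
    (measurableSet_eq_fun hY hZ).compl
  have : P {ω | Y ω ≠ Z ω}ᶜ = 1 := (prob_compl_eq_one_iff hms).mpr hnull
  convert this using 2
  ext ω
  simp [Set.mem_compl_iff]
end

section
/- Let (S, Δ, P) be a probability space, let (α,β) be an (α,β)-pair, let 0 < γ₁ ≤ 1 and 0 < γ₂ ≤ 1, and let {X_n}, {Y_n} be sequences of real-valued random variables on S. If X_n →^{PS_{αβ}^{γ₁}} X and Y_n →^{PS_{αβ}^{γ₂}} Y, then for any real constants c and d, the sequence {cX_n + dY_n} is αβ-statistically convergent of order max{γ₁, γ₂} in probability to cX + dY. -/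
/-!
If `|X_k - X₀| < η` and `|Y_k - Y₀| < η` with `η = ε / (|c| + |d| + 1)`, then
`|c X_k + d Y_k - (c X₀ + d Y₀)| < ε`. Hence, by subadditivity,
`P(|c X_k + d Y_k - (c X₀ + d Y₀)| ≥ ε) ≥ δ` forces `P(|X_k - X₀| ≥ η) ≥ δ / 2` or
`P(|Y_k - Y₀| ≥ η) ≥ δ / 2`, so the exceptional indices of the combination are covered by those
of `X` and of `Y` (at `η, δ / 2`). Their counts, divided by `(β_n - α_n + 1) ^ γ₁` resp. `^ γ₂`,
tend to `0`, and dividing instead by the larger power `(β_n - α_n + 1) ^ max γ₁ γ₂` (the base is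
`≥ 1` whenever `[α_n, β_n]` contains an index) only makes them smaller.
-/

open MeasureTheory Filter Set

lemma abIdx_finite (a b : ℕ → ℝ) (n : ℕ) (p : ℕ → Prop) : (abIdx a b n p).Finite :=
  (Set.finite_Iic ⌊b n⌋₊).subset fun _ hk => Nat.le_floor hk.2.1

noncomputable def abRatio (a b : ℕ → ℝ) (γ : ℝ) (p : ℕ → Prop) (n : ℕ) : ℝ :=
  ((abIdx a b n p).ncard : ℝ) / (b n - a n + 1) ^ γ

section abRatio

variable {a b : ℕ → ℝ} {n : ℕ} {p q r : ℕ → Prop}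

lemma one_le_sub_add_one_of_abIdx_nonempty (h : (abIdx a b n p).Nonempty) :
    1 ≤ b n - a n + 1 := by
  obtain ⟨k, hak, hkb, -⟩ := h
  linarith

lemma abRatio_nonneg (γ : ℝ) : 0 ≤ abRatio a b γ p n := by
  rcases (abIdx a b n p).eq_empty_or_nonempty with h | h
  · simp [abRatio, h]
  · have := one_le_sub_add_one_of_abIdx_nonempty h
    exact div_nonneg (Nat.cast_nonneg _) (Real.rpow_nonneg (by linarith) γ)

lemma abRatio_anti {γ γ' : ℝ} (hγ : γ ≤ γ') : abRatio a b γ' p n ≤ abRatio a b γ p n := by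
  rcases (abIdx a b n p).eq_empty_or_nonempty with h | h
  · simp [abRatio, h]
  · have hbase := one_le_sub_add_one_of_abIdx_nonempty h
    exact div_le_div_of_nonneg_left (Nat.cast_nonneg _)
      (Real.rpow_pos_of_pos (by linarith) γ) (Real.rpow_le_rpow_of_exponent_le hbase hγ)

lemma abRatio_le_add (γ : ℝ) (hpqr : ∀ k, p k → q k ∨ r k) :
    abRatio a b γ p n ≤ abRatio a b γ q n + abRatio a b γ r n := by
  have hsub : abIdx a b n p ⊆ abIdx a b n q ∪ abIdx a b n r := fun k ⟨hak, hkb, hk⟩ =>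
    (hpqr k hk).imp (fun hq => ⟨hak, hkb, hq⟩) (fun hr => ⟨hak, hkb, hr⟩)
  have hcard : ((abIdx a b n p).ncard : ℝ) ≤ (abIdx a b n q).ncard + (abIdx a b n r).ncard := by
    exact_mod_cast (Set.ncard_le_ncard hsub
      ((abIdx_finite a b n q).union (abIdx_finite a b n r))).trans (Set.ncard_union_le _ _)
  rcases (abIdx a b n p).eq_empty_or_nonempty with h | h
  · simpa [abRatio, h] using add_nonneg (abRatio_nonneg (p := q) γ) (abRatio_nonneg (p := r) γ)
  · have := one_le_sub_add_one_of_abIdx_nonempty h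
    rw [abRatio, abRatio, abRatio, ← add_div]
    gcongr

lemma tendsto_abRatio_of_imp_or {γ₁ γ₂ γ : ℝ} (h₁ : γ₁ ≤ γ) (h₂ : γ₂ ≤ γ)
    (hpqr : ∀ k, p k → q k ∨ r k)
    (hq : Tendsto (abRatio a b γ₁ q) atTop (nhds 0))
    (hr : Tendsto (abRatio a b γ₂ r) atTop (nhds 0)) :
    Tendsto (abRatio a b γ p) atTop (nhds 0) := by
  refine squeeze_zero (fun _ => abRatio_nonneg γ) (fun n => ?_) (by simpa using hq.add hr)
  exact (abRatio_le_add γ hpqr).trans (add_le_add (abRatio_anti h₁) (abRatio_anti h₂))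

end abRatio

lemma le_abs_or_le_abs_of_le_abs_mul_add_mul {c d u v ε : ℝ} (h : ε ≤ |c * u + d * v|) :
    ε / (|c| + |d| + 1) ≤ |u| ∨ ε / (|c| + |d| + 1) ≤ |v| := by
  set η := ε / (|c| + |d| + 1)
  have hε : (|c| + |d| + 1) * η = ε := mul_div_cancel₀ ε (by positivity)
  by_contra! huv
  have hη_pos : 0 < η := (abs_nonneg u).trans_lt huv.1
  have : |c * u + d * v| < ε :=
    calc |c * u + d * v| ≤ |c| * |u| + |d| * |v| := by
          simpa only [abs_mul] using abs_add_le (c * u) (d * v)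
      _ ≤ |c| * η + |d| * η := by gcongr <;> linarith [huv.1, huv.2]
      _ < (|c| + |d| + 1) * η := by linarith
      _ = ε := hε
  linarith

lemma measureReal_le_abs_mul_add_mul_le {Ω : Type*} [MeasurableSpace Ω] (μ : Measure Ω)
    [IsFiniteMeasure μ] (f g : Ω → ℝ) (c d ε : ℝ) :
    μ.real {ω | ε ≤ |c * f ω + d * g ω|} ≤
      μ.real {ω | ε / (|c| + |d| + 1) ≤ |f ω|} + μ.real {ω | ε / (|c| + |d| + 1) ≤ |g ω|} :=
  (measureReal_mono fun _ hω => le_abs_or_le_abs_of_le_abs_mul_add_mul hω).trans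
    (measureReal_union_le _ _)

theorem PSConv_linear_combination_general {Ω : Type*} [MeasurableSpace Ω]
    (P : Measure Ω) [IsProbabilityMeasure P]
    (a b : ℕ → ℝ)
    (γ₁ γ₂ : ℝ)
    (X Y : ℕ → Ω → ℝ) (X₀ Y₀ : Ω → ℝ)
    (h1 : PSConv P a b γ₁ X X₀) (h2 : PSConv P a b γ₂ Y Y₀) (c d : ℝ) :
    PSConv P a b (max γ₁ γ₂) (fun n ω => c * X n ω + d * Y n ω)
      (fun ω => c * X₀ ω + d * Y₀ ω) := by
  intro ε hε δ hδ
  set η := ε / (|c| + |d| + 1)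
  have hη : 0 < η := by positivity
  refine tendsto_abRatio_of_imp_or (le_max_left γ₁ γ₂) (le_max_right γ₁ γ₂) (fun k hk => ?_)
    (h1 η hη (δ / 2) (half_pos hδ)) (h2 η hη (δ / 2) (half_pos hδ))
  have hsplit := measureReal_le_abs_mul_add_mul_le P (fun ω => X k ω - X₀ ω)
    (fun ω => Y k ω - Y₀ ω) c d ε
  dsimp only at hk
  have hk' : δ ≤ P.real {ω | ε ≤ |c * (X k ω - X₀ ω) + d * (Y k ω - Y₀ ω)|} := by
    rw [measureReal_def]
    convert hk using 7 with ω
    ring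
  by_contra! h
  have hsum := hk'.trans hsplit
  rw [measureReal_def, measureReal_def] at hsum
  linarith [h.1, h.2]

/-- Theorem 2.2(ii): linear combinations of αβ-statistically convergent (in probability)
sequences converge to the corresponding linear combination, with order `max γ₁ γ₂`. -/
theorem PSConv_linear_combination {Ω : Type*} [MeasurableSpace Ω]
    (P : Measure Ω) [IsProbabilityMeasure P]
    (a b : ℕ → ℝ) (hab : ABPair a b)
    (γ₁ γ₂ : ℝ) (hγ₁0 : 0 < γ₁) (hγ₁1 : γ₁ ≤ 1) (hγ₂0 : 0 < γ₂) (hγ₂1 : γ₂ ≤ 1)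
    (X Y : ℕ → Ω → ℝ) (X₀ Y₀ : Ω → ℝ)
    (hX : ∀ n, Measurable (X n)) (hY : ∀ n, Measurable (Y n))
    (hX₀ : Measurable X₀) (hY₀ : Measurable Y₀)
    (h1 : PSConv P a b γ₁ X X₀) (h2 : PSConv P a b γ₂ Y Y₀) (c d : ℝ) :
    PSConv P a b (max γ₁ γ₂) (fun n ω => c * X n ω + d * Y n ω)
      (fun ω => c * X₀ ω + d * Y₀ ω) :=
  PSConv_linear_combination_general P a b γ₁ γ₂ X Y X₀ Y₀ h1 h2 c d
end

section
/- Let 0 < γ ≤ 1 and let (α,β) and (α′,β′) be two (α,β)-pairs such that [α′_n, β′_n] ⊆ [α_n, β_n] for all n ∈ ℕ and such that there exists ε > 0 with (β_n − α_n + 1)^γ ≤ ε · (β′_n − α′_n + 1)^γ for all n ∈ ℕ. Then for any probability space (S, Δ, P) and any sequence {X_n} of real-valued random variables on S, X_n →^{PS_{αβ}^γ} X implies X_n →^{PS_{α′β′}^γ} X. -/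
open MeasureTheory Filter Set

/-- Theorem 2.3: if `[α'_n, β'_n] ⊆ [α_n, β_n]` and
`(β_n - α_n + 1)^γ ≤ ε (β'_n - α'_n + 1)^γ` for some `ε > 0`, then
`PS_{αβ}^γ ⊆ PS_{α'β'}^γ`. -/
theorem PSConv_subpair {Ω : Type*} [MeasurableSpace Ω]
    (P : Measure Ω) [IsProbabilityMeasure P]
    (γ : ℝ) (hγ0 : 0 < γ) (hγ1 : γ ≤ 1)
    (a b a' b' : ℕ → ℝ) (hab : ABPair a b) (hab' : ABPair a' b')
    (hsub : ∀ n, {k : ℕ | a' n ≤ (k : ℝ) ∧ (k : ℝ) ≤ b' n}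
      ⊆ {k : ℕ | a n ≤ (k : ℝ) ∧ (k : ℝ) ≤ b n})
    (hcmp : ∃ ε > 0, ∀ n, (b n - a n + 1) ^ γ ≤ ε * (b' n - a' n + 1) ^ γ)
    (X : ℕ → Ω → ℝ) (X₀ : Ω → ℝ)
    (hX : ∀ n, Measurable (X n)) (hX₀ : Measurable X₀)
    (h : PSConv P a b γ X X₀) :
    PSConv P a' b' γ X X₀ := by
  obtain ⟨C, hC, hCle⟩ := hcmp
  intro ε hε δ hδ
  have hmain := h ε hε δ hδ
  have hmain' : Tendsto (fun n =>
      C * (((abIdx a b n fun k => δ ≤ (P {ω | ε ≤ |X k ω - X₀ ω|}).toReal).ncard : ℝ)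
        / (b n - a n + 1) ^ γ)) atTop (nhds 0) := by
    simpa using hmain.const_mul C
  have hpos'' : ∀ n, (0:ℝ) < (b' n - a' n + 1) ^ γ := fun n =>
    Real.rpow_pos_of_pos (by have := hab'.2.2.2.1 n; linarith) γ
  apply squeeze_zero (fun n => div_nonneg (by positivity) (hpos'' n).le) _ hmain'
  intro n
  set p : ℕ → Prop := fun k => δ ≤ (P {ω | ε ≤ |X k ω - X₀ ω|}).toReal with hp
  have hfin : (abIdx a b n p).Finite := by
    apply (Set.finite_Iic ⌊b n⌋₊).subset
    intro k hk
    exact Set.mem_Iic.mpr (Nat.le_floor hk.2.1)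
  have hsubn : abIdx a' b' n p ⊆ abIdx a b n p := by
    intro k hk
    obtain ⟨h1, h2⟩ := hsub n ⟨hk.1, hk.2.1⟩
    exact ⟨h1, h2, hk.2.2⟩
  have hcard : ((abIdx a' b' n p).ncard : ℝ) ≤ ((abIdx a b n p).ncard : ℝ) := by
    exact_mod_cast Set.ncard_le_ncard hsubn hfin
  have hpos' : (0 : ℝ) < (b' n - a' n + 1) ^ γ := hpos'' n
  have hpos : (0 : ℝ) < (b n - a n + 1) ^ γ :=
    Real.rpow_pos_of_pos (by have := hab.2.2.2.1 n; linarith) γ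
  rw [div_le_iff₀ hpos']
  calc ((abIdx a' b' n p).ncard : ℝ) ≤ ((abIdx a b n p).ncard : ℝ) := hcard
    _ = ((abIdx a b n p).ncard : ℝ) / (b n - a n + 1) ^ γ * (b n - a n + 1) ^ γ := by
        field_simp
    _ ≤ ((abIdx a b n p).ncard : ℝ) / (b n - a n + 1) ^ γ * (C * (b' n - a' n + 1) ^ γ) := by
        apply mul_le_mul_of_nonneg_left (hCle n) (by positivity)
    _ = C * (((abIdx a b n p).ncard : ℝ) / (b n - a n + 1) ^ γ) * (b' n - a' n + 1) ^ γ := by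
        ring
end

section
/- Let (S, Δ, P) be a probability space, let (α,β) be an (α,β)-pair, let p > 0 and let 0 < γ₁ ≤ γ₂ ≤ 1. If a sequence {X_n} of real-valued random variables on S satisfies X_n →^{PW_{αβ}^{γ₁,p}} X, then X_n →^{PS_{αβ}^{γ₂}} X; that is, αβ-strong p-Cesàro summability of order γ₁ in probability implies αβ-statistical convergence of order γ₂ in probability to the same limit. -/
open MeasureTheory Filter Set

/-- Theorem 2.5: `PW_{αβ}^{γ₁,p} ⊆ PS_{αβ}^{γ₂}` for `0 < γ₁ ≤ γ₂ ≤ 1`. -/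
theorem PWConv_implies_PSConv {Ω : Type*} [MeasurableSpace Ω]
    (P : Measure Ω) [IsProbabilityMeasure P]
    (a b : ℕ → ℝ) (hab : ABPair a b) (p : ℝ) (hp : 0 < p)
    (γ₁ γ₂ : ℝ) (hγ₁0 : 0 < γ₁) (h12 : γ₁ ≤ γ₂) (hγ₂1 : γ₂ ≤ 1)
    (X : ℕ → Ω → ℝ) (X₀ : Ω → ℝ)
    (hX : ∀ n, Measurable (X n)) (hX₀ : Measurable X₀)
    (h : PWConv P a b γ₁ p X X₀) :
    PSConv P a b γ₂ X X₀ := by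
  intro ε hε δ hδ
  classical
  have hsum := (h ε hε).const_mul (δ ^ p)⁻¹
  rw [mul_zero] at hsum
  apply squeeze_zero' ?_ ?_ hsum
  · filter_upwards with n
    have hD : (1:ℝ) ≤ b n - a n + 1 := by
      have := hab.2.2.2.1 n; linarith
    positivity
  · filter_upwards with n
    set pk : ℕ → ℝ := fun k => (P {ω | ε ≤ |X k ω - X₀ ω|}).toReal with hpk
    have hbn : (0:ℝ) ≤ b n := le_trans (hab.2.2.1 n).le (hab.2.2.2.1 n)
    have hD : (1:ℝ) ≤ b n - a n + 1 := by
      have := hab.2.2.2.1 n; linarith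
    set F : Finset ℕ := (Finset.Icc ⌈a n⌉₊ ⌊b n⌋₊).filter (fun k => δ ≤ pk k) with hF
    have hset : (abIdx a b n fun k => δ ≤ pk k) = ↑F := by
      ext k
      simp only [abIdx, Set.mem_setOf_eq, hF, Finset.coe_filter, Finset.mem_Icc,
        Nat.ceil_le, Nat.le_floor_iff hbn]
      tauto
    have hcard : ((abIdx a b n fun k => δ ≤ pk k).ncard : ℝ) = (F.card : ℝ) := by
      rw [hset, Set.ncard_coe_finset]
    have hbound : δ ^ p * (F.card : ℝ) ≤
        ∑ k ∈ Finset.Icc ⌈a n⌉₊ ⌊b n⌋₊, pk k ^ p := by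
      have h1 : (F.card : ℝ) * (δ ^ p) ≤ ∑ k ∈ F, pk k ^ p := by
        have := Finset.card_nsmul_le_sum F (fun k => pk k ^ p) (δ ^ p)
          (fun k hk => Real.rpow_le_rpow hδ.le (Finset.mem_filter.mp hk).2 hp.le)
        simpa [nsmul_eq_mul] using this
      have h2 : ∑ k ∈ F, pk k ^ p ≤ ∑ k ∈ Finset.Icc ⌈a n⌉₊ ⌊b n⌋₊, pk k ^ p := by
        apply Finset.sum_le_sum_of_subset_of_nonneg (Finset.filter_subset _ _)
        intro k _ _
        exact Real.rpow_nonneg ENNReal.toReal_nonneg p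
      calc δ ^ p * (F.card : ℝ) = (F.card : ℝ) * (δ ^ p) := mul_comm _ _
        _ ≤ _ := le_trans h1 h2
    have hDγ : (b n - a n + 1) ^ γ₁ ≤ (b n - a n + 1) ^ γ₂ :=
      Real.rpow_le_rpow_of_exponent_le hD h12
    have hDγ₁pos : (0:ℝ) < (b n - a n + 1) ^ γ₁ :=
      Real.rpow_pos_of_pos (by linarith) _
    have hDγ₂pos : (0:ℝ) < (b n - a n + 1) ^ γ₂ :=
      Real.rpow_pos_of_pos (by linarith) _
    have hδp : (0:ℝ) < δ ^ p := Real.rpow_pos_of_pos hδ _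
    rw [hcard]
    have step1 : (F.card : ℝ) / (b n - a n + 1) ^ γ₂ ≤
        (F.card : ℝ) / (b n - a n + 1) ^ γ₁ :=
      div_le_div_of_nonneg_left (by positivity) hDγ₁pos hDγ
    refine le_trans step1 ?_
    rw [← mul_div_assoc]
    apply div_le_div_of_nonneg_right ?_ hDγ₁pos.le |>.trans_eq rfl
    rw [← le_div_iff₀' hδp] at hbound
    simpa [div_eq_inv_mul] using hbound
end

section
/- Let (S, Δ, P) be a probability space, let (α,β) be an (α,β)-pair, let p > 0, and let {X_n} be a sequence of real-valued random variables on S. Then X_n →^{PW_{αβ}^{1,p}} X if and only if X_n →^{PS_{αβ}^{1}} X; that is, for γ = 1, αβ-strong p-Cesàro summability in probability coincides with αβ-statistical convergence in probability. -/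
open MeasureTheory Filter Set

private lemma abIdx_eq_filter (a b : ℕ → ℝ) (n : ℕ) (hb : 0 ≤ b n)
    (pred : ℕ → Prop) [DecidablePred pred] :
    abIdx a b n pred = ↑((Finset.Icc ⌈a n⌉₊ ⌊b n⌋₊).filter pred) := by
  ext k
  simp only [abIdx, Set.mem_setOf_eq, Finset.coe_filter, Finset.mem_Icc,
    Nat.ceil_le, Nat.le_floor_iff hb]
  tauto

private lemma abIdx_ncard_eq (a b : ℕ → ℝ) (n : ℕ) (hb : 0 ≤ b n)
    (pred : ℕ → Prop) [DecidablePred pred] :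
    (abIdx a b n pred).ncard = ((Finset.Icc ⌈a n⌉₊ ⌊b n⌋₊).filter pred).card := by
  rw [abIdx_eq_filter a b n hb pred, Set.ncard_coe_finset]

/-- Theorem 2.6(i): for `γ = 1`, αβ-strong p-Cesàro summability in probability
coincides with αβ-statistical convergence in probability. -/
theorem PWConv_iff_PSConv_order_one {Ω : Type*} [MeasurableSpace Ω]
    (P : Measure Ω) [IsProbabilityMeasure P]
    (a b : ℕ → ℝ) (hab : ABPair a b) (p : ℝ) (hp : 0 < p)
    (X : ℕ → Ω → ℝ) (X₀ : Ω → ℝ)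
    (hX : ∀ n, Measurable (X n)) (hX₀ : Measurable X₀) :
    PWConv P a b 1 p X X₀ ↔ PSConv P a b 1 X X₀ := by
  classical
  obtain ⟨_, _, ha_pos, hab_le, _⟩ := hab
  set D : ℕ → ℝ := fun n => b n - a n + 1 with hDdef
  have hD1 : ∀ n, (1 : ℝ) ≤ D n := fun n => by
    have := hab_le n; simp only [hDdef]; linarith
  have hD0 : ∀ n, (0 : ℝ) < D n := fun n => lt_of_lt_of_le one_pos (hD1 n)
  have hb0 : ∀ n, (0 : ℝ) ≤ b n := fun n => le_trans (ha_pos n).le (hab_le n)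
  set q : ℕ → ℝ → ℝ := fun k e => (P {ω | e ≤ |X k ω - X₀ ω|}).toReal with hqdef
  have hq0 : ∀ k e, 0 ≤ q k e := fun k e => ENNReal.toReal_nonneg
  have hq1 : ∀ k e, q k e ≤ 1 := by
    intro k e
    have h := ENNReal.toReal_mono ENNReal.one_ne_top
      (prob_le_one (μ := P) (s := {ω | e ≤ |X k ω - X₀ ω|}))
    simpa using h
  -- the cardinality of the Icc is at most D n
  have hcardIcc : ∀ n, ((Finset.Icc ⌈a n⌉₊ ⌊b n⌋₊).card : ℝ) ≤ D n := by
    intro n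
    have hfl : (⌊b n⌋₊ : ℝ) ≤ b n := Nat.floor_le (hb0 n)
    have hce : a n ≤ (⌈a n⌉₊ : ℝ) := Nat.le_ceil _
    have hce' : (⌈a n⌉₊ : ℝ) < a n + 1 := Nat.ceil_lt_add_one (ha_pos n).le
    have hfl' : b n < (⌊b n⌋₊ : ℝ) + 1 := Nat.lt_floor_add_one _
    have hle : ⌈a n⌉₊ ≤ ⌊b n⌋₊ + 1 := by
      have : (⌈a n⌉₊ : ℝ) < (⌊b n⌋₊ : ℝ) + 2 := by
        have := hab_le n; linarith
      exact_mod_cast Nat.lt_add_one_iff.mp (by exact_mod_cast this)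
    rw [Nat.card_Icc, Nat.cast_sub hle]
    push_cast
    simp only [hDdef]
    linarith
  constructor
  · -- PW → PS
    intro hPW ε hε δ hδ
    have hδp : (0 : ℝ) < δ ^ p := Real.rpow_pos_of_pos hδ p
    have hg := hPW ε hε
    simp only [Real.rpow_one] at hg ⊢
    have key : ∀ n,
        ((abIdx a b n fun k => δ ≤ q k ε).ncard : ℝ) / D n ≤
          (δ ^ p)⁻¹ *
            ((∑ k ∈ Finset.Icc ⌈a n⌉₊ ⌊b n⌋₊, (q k ε) ^ p) / D n) := by
      intro n
      set T := Finset.Icc ⌈a n⌉₊ ⌊b n⌋₊ with hT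
      set F := T.filter (fun k => δ ≤ q k ε) with hF
      have hcard : ((abIdx a b n fun k => δ ≤ q k ε).ncard : ℝ) = (F.card : ℝ) := by
        rw [abIdx_ncard_eq a b n (hb0 n)]
      have hsum1 : (F.card : ℝ) * δ ^ p ≤ ∑ k ∈ F, (q k ε) ^ p := by
        calc (F.card : ℝ) * δ ^ p = ∑ _k ∈ F, δ ^ p := by
              rw [Finset.sum_const, nsmul_eq_mul]
          _ ≤ ∑ k ∈ F, (q k ε) ^ p := Finset.sum_le_sum (fun k hk =>
              Real.rpow_le_rpow hδ.le (Finset.mem_filter.mp hk).2 hp.le)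
      have hsum2 : ∑ k ∈ F, (q k ε) ^ p ≤ ∑ k ∈ T, (q k ε) ^ p :=
        Finset.sum_le_sum_of_subset_of_nonneg (Finset.filter_subset _ _)
          (fun k _ _ => Real.rpow_nonneg (hq0 k ε) p)
      have h2 : (F.card : ℝ) ≤ (δ ^ p)⁻¹ * ∑ k ∈ T, (q k ε) ^ p := by
        rw [inv_mul_eq_div, le_div_iff₀ hδp]
        exact le_trans hsum1 hsum2
      rw [hcard, mul_div_assoc']
      exact div_le_div_of_nonneg_right h2 (hD0 n).le
    refine squeeze_zero (fun n => div_nonneg (by positivity) (hD0 n).le)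
      (fun n => key n) ?_
    simpa using hg.const_mul ((δ ^ p)⁻¹)
  · -- PS → PW
    intro hPS ε hε
    simp only [Real.rpow_one] at *
    rw [NormedAddCommGroup.tendsto_nhds_zero]
    intro η hη
    set δ : ℝ := (η / 2) ^ (1 / p) with hδdef
    have hδ : 0 < δ := Real.rpow_pos_of_pos (by linarith) _
    have hδp : δ ^ p = η / 2 := by
      rw [hδdef, ← Real.rpow_mul (by linarith : (0:ℝ) ≤ η / 2), one_div,
        inv_mul_cancel₀ hp.ne', Real.rpow_one]
    have hPS' := hPS ε hε δ hδ
    have hev : ∀ᶠ n in atTop,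
        ((abIdx a b n fun k => δ ≤ q k ε).ncard : ℝ) / D n < η / 2 := by
      have := hPS'.eventually (eventually_lt_nhds (show (0:ℝ) < η / 2 by linarith))
      simpa using this
    filter_upwards [hev] with n hn
    set T := Finset.Icc ⌈a n⌉₊ ⌊b n⌋₊ with hT
    set F := T.filter (fun k => δ ≤ q k ε) with hF
    have hcard : ((abIdx a b n fun k => δ ≤ q k ε).ncard : ℝ) = (F.card : ℝ) := by
      rw [abIdx_ncard_eq a b n (hb0 n)]
    have hsplit : ∑ k ∈ T, (q k ε) ^ p ≤ (F.card : ℝ) + (T.card : ℝ) * δ ^ p := by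
      rw [← Finset.sum_filter_add_sum_filter_not T (fun k => δ ≤ q k ε)]
      gcongr ?_ + ?_
      · calc ∑ k ∈ F, (q k ε) ^ p ≤ ∑ _k ∈ F, (1 : ℝ) :=
              Finset.sum_le_sum (fun k _ =>
                Real.rpow_le_one (hq0 k ε) (hq1 k ε) hp.le)
          _ = (F.card : ℝ) := by simp
      · calc ∑ k ∈ T.filter (fun k => ¬ δ ≤ q k ε), (q k ε) ^ p
            ≤ ∑ _k ∈ T.filter (fun k => ¬ δ ≤ q k ε), δ ^ p :=
              Finset.sum_le_sum (fun k hk => by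
                have hk' : q k ε < δ := lt_of_not_ge (Finset.mem_filter.mp hk).2
                exact Real.rpow_le_rpow (hq0 k ε) hk'.le hp.le)
          _ = ((T.filter (fun k => ¬ δ ≤ q k ε)).card : ℝ) * δ ^ p := by
              simp [mul_comm]
          _ ≤ (T.card : ℝ) * δ ^ p := by
              have : (T.filter (fun k => ¬ δ ≤ q k ε)).card ≤ T.card :=
                Finset.card_filter_le _ _
              have hδpnn : (0:ℝ) ≤ δ ^ p := (Real.rpow_pos_of_pos hδ p).le
              exact mul_le_mul_of_nonneg_right (by exact_mod_cast this) hδpnn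
    have hbound : (∑ k ∈ T, (q k ε) ^ p) / D n ≤ (F.card : ℝ) / D n + δ ^ p := by
      rw [div_add' _ _ _ (hD0 n).ne']
      apply div_le_div_of_nonneg_right ?_ (hD0 n).le
      calc ∑ k ∈ T, (q k ε) ^ p ≤ (F.card : ℝ) + (T.card : ℝ) * δ ^ p := hsplit
        _ ≤ (F.card : ℝ) + D n * δ ^ p := by
            have hδpnn : (0:ℝ) ≤ δ ^ p := (Real.rpow_pos_of_pos hδ p).le
            have := mul_le_mul_of_nonneg_right (hcardIcc n) hδpnn
            linarith
        _ = (F.card : ℝ) + δ ^ p * D n := by ring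
    have hnonneg : (0:ℝ) ≤ (∑ k ∈ T, (q k ε) ^ p) / D n :=
      div_nonneg (Finset.sum_nonneg fun k _ => Real.rpow_nonneg (hq0 k ε) p)
        (hD0 n).le
    rw [Real.norm_eq_abs, abs_of_nonneg hnonneg]
    rw [hcard] at hn
    calc (∑ k ∈ T, (q k ε) ^ p) / D n ≤ (F.card : ℝ) / D n + δ ^ p := hbound
      _ < η / 2 + η / 2 := by rw [hδp]; linarith
      _ = η := by ring
end

section
/- Let (S, Δ, P) be a probability space, let (α,β) be an (α,β)-pair, let 0 < γ ≤ 1 and r > 0, and let {X_n} be a sequence of real-valued random variables on S with E(|X_n|^r) < ∞ for all n, and let X be a random variable on S with E(|X|^r) < ∞. If X_n →^{ES_{αβ}^{γ,r}} X, then X_n →^{PS_{αβ}^{γ}} X; that is, αβ-statistical convergence of order γ in r-th expectation implies αβ-statistical convergence of order γ in probability. -/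
open MeasureTheory Filter Set

/-- Theorem 3.1: αβ-statistical convergence of order γ in r-th expectation implies
αβ-statistical convergence of order γ in probability. -/
theorem ESConv_implies_PSConv {Ω : Type*} [MeasurableSpace Ω]
    (P : Measure Ω) [IsProbabilityMeasure P]
    (a b : ℕ → ℝ) (hab : ABPair a b)
    (γ : ℝ) (hγ0 : 0 < γ) (hγ1 : γ ≤ 1) (r : ℝ) (hr : 0 < r)
    (X : ℕ → Ω → ℝ) (X₀ : Ω → ℝ)
    (hX : ∀ n, Measurable (X n)) (hX₀ : Measurable X₀)
    (hXint : ∀ n, Integrable (fun ω => |X n ω| ^ r) P)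
    (hX₀int : Integrable (fun ω => |X₀ ω| ^ r) P)
    (h : ESConv P a b γ r X X₀) :
    PSConv P a b γ X X₀ := by
  intro ε hε δ hδ
  -- integrability of |X k - X₀|^r
  have hint : ∀ k, Integrable (fun ω => |X k ω - X₀ ω| ^ r) P := by
    intro k
    have hmeas : AEStronglyMeasurable (fun ω => |X k ω - X₀ ω| ^ r) P := by
      exact (((by measurability : Measurable fun y : ℝ => |y| ^ r)).comp
        ((hX k).sub hX₀)).aestronglyMeasurable
    refine Integrable.mono' (g := fun ω => 2 ^ r * (|X k ω| ^ r + |X₀ ω| ^ r))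
      (((hXint k).add hX₀int).const_mul _) hmeas (ae_of_all _ fun ω => ?_)
    have h1 : |X k ω - X₀ ω| ≤ 2 * max |X k ω| |X₀ ω| := by
      calc |X k ω - X₀ ω| ≤ |X k ω| + |X₀ ω| := abs_sub _ _
        _ ≤ 2 * max |X k ω| |X₀ ω| := by
          rw [two_mul]
          exact add_le_add (le_max_left _ _) (le_max_right _ _)
    have h2 : |X k ω - X₀ ω| ^ r ≤ (2 * max |X k ω| |X₀ ω|) ^ r :=
      Real.rpow_le_rpow (abs_nonneg _) h1 hr.le
    rw [Real.norm_eq_abs, abs_of_nonneg (Real.rpow_nonneg (abs_nonneg _) r)]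
    refine h2.trans ?_
    rw [Real.mul_rpow (by norm_num) (le_max_iff.mpr (Or.inl (abs_nonneg _)))]
    refine mul_le_mul_of_nonneg_left ?_ (Real.rpow_nonneg (by norm_num) r)
    rcases max_cases |X k ω| |X₀ ω| with ⟨hm, _⟩ | ⟨hm, _⟩ <;> rw [hm]
    · exact le_add_of_nonneg_right (Real.rpow_nonneg (abs_nonneg _) r)
    · exact le_add_of_nonneg_left (Real.rpow_nonneg (abs_nonneg _) r)
  -- key subset inclusion
  have hsub : ∀ n, (abIdx a b n fun k => δ ≤ (P {ω | ε ≤ |X k ω - X₀ ω|}).toReal) ⊆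
      abIdx a b n fun k => δ * ε ^ r ≤ ∫ ω, |X k ω - X₀ ω| ^ r ∂P := by
    intro n k ⟨h1, h2, h3⟩
    refine ⟨h1, h2, ?_⟩
    have hset : {ω | ε ≤ |X k ω - X₀ ω|} = {ω | ε ^ r ≤ |X k ω - X₀ ω| ^ r} := by
      ext ω
      simp only [Set.mem_setOf_eq]
      exact ⟨fun hh => Real.rpow_le_rpow hε.le hh hr.le,
        fun hh => by
          by_contra hc
          push_neg at hc
          exact absurd hh (not_le.mpr (Real.rpow_lt_rpow (abs_nonneg _) hc hr))⟩
    have hmarkov := mul_meas_ge_le_integral_of_nonneg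
      (f := fun ω => |X k ω - X₀ ω| ^ r)
      (ae_of_all _ fun ω => Real.rpow_nonneg (abs_nonneg _) r) (hint k) (ε ^ r)
    calc δ * ε ^ r ≤ (P {ω | ε ≤ |X k ω - X₀ ω|}).toReal * ε ^ r := by
          have := Real.rpow_pos_of_pos hε r
          nlinarith
      _ = ε ^ r * (P {ω | ε ^ r ≤ |X k ω - X₀ ω| ^ r}).toReal := by
          rw [← hset, mul_comm]
      _ ≤ ∫ ω, |X k ω - X₀ ω| ^ r ∂P := hmarkov
  -- finiteness
  have hfin : ∀ n (p : ℕ → Prop), (abIdx a b n p).Finite := by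
    intro n p
    apply Set.Finite.subset (Set.finite_Icc 0 ⌊b n⌋₊)
    rintro k ⟨_, h2, _⟩
    exact ⟨Nat.zero_le _, Nat.le_floor h2⟩
  have hd : ∀ n, 0 < (b n - a n + 1) ^ γ := by
    intro n
    apply Real.rpow_pos_of_pos
    have := hab.2.2.2.1 n; linarith
  refine tendsto_of_tendsto_of_tendsto_of_le_of_le tendsto_const_nhds
    (h (δ * ε ^ r) (mul_pos hδ (Real.rpow_pos_of_pos hε r))) (fun n => ?_) (fun n => ?_)
  · exact div_nonneg (Nat.cast_nonneg _) (hd n).le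
  · gcongr <;>
      first
        | exact (hd n).le
        | exact hfin n _
        | exact hsub n
end

section
/- Let (S, Δ, P) be a probability space, let (α,β) be an (α,β)-pair, let 0 < γ ≤ 1, and let {X_n} be a sequence of real-valued random variables on S. If X_n →^{PS_{αβ}^{γ}} X, then X_n →^{DS_{αβ}^{γ}} X; that is, αβ-statistical convergence of order γ in probability implies αβ-statistical convergence of order γ in distribution. -/
open MeasureTheory Filter Set

lemma toReal_measure_le_add {Ω : Type*} [MeasurableSpace Ω] (P : Measure Ω)
    [IsFiniteMeasure P] {A B C : Set Ω} (h : A ⊆ B ∪ C) :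
    (P A).toReal ≤ (P B).toReal + (P C).toReal := by
  have hle : P A ≤ P B + P C := (measure_mono h).trans (measure_union_le B C)
  calc (P A).toReal ≤ (P B + P C).toReal :=
        ENNReal.toReal_mono (ENNReal.add_ne_top.2 ⟨measure_ne_top P B, measure_ne_top P C⟩) hle
    _ = (P B).toReal + (P C).toReal := ENNReal.toReal_add (measure_ne_top P B) (measure_ne_top P C)

/-- Theorem 4.2: αβ-statistical convergence of order γ in probability implies
αβ-statistical convergence of order γ in distribution. -/
theorem PSConv_implies_DSConv {Ω : Type*} [MeasurableSpace Ω]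
    (P : Measure Ω) [IsProbabilityMeasure P]
    (a b : ℕ → ℝ) (hab : ABPair a b)
    (γ : ℝ) (hγ0 : 0 < γ) (hγ1 : γ ≤ 1)
    (X : ℕ → Ω → ℝ) (X₀ : Ω → ℝ)
    (hX : ∀ n, Measurable (X n)) (hX₀ : Measurable X₀)
    (h : PSConv P a b γ X X₀) :
    DSConv P a b γ X X₀ := by
  intro x hcont
  intro ε hε
  -- notation for the limit distribution function
  set F : ℝ → ℝ := fun t => (P {ω | X₀ ω ≤ t}).toReal with hF
  -- continuity at x gives η
  rw [Metric.continuousAt_iff] at hcont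
  obtain ⟨η, hη, hcont⟩ := hcont (ε / 4) (by positivity)
  set η' := η / 2 with hη'
  have hη'0 : 0 < η' := by positivity
  have habs : ∀ t : ℝ, |t - x| < η → |F t - F x| < ε / 4 := by
    intro t ht
    simpa [Real.dist_eq] using hcont (by simpa [Real.dist_eq] using ht)
  have hplus : |F (x + η') - F x| < ε / 4 := habs _ (by rw [add_sub_cancel_left, abs_of_pos hη'0]; linarith)
  have hminus : |F (x - η') - F x| < ε / 4 := habs _ (by
    rw [sub_sub_cancel_left, abs_neg, abs_of_pos hη'0]; linarith)
  -- the key pointwise implication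
  have key : ∀ k : ℕ, ε ≤ |(P {ω | X k ω ≤ x}).toReal - F x| →
      ε / 2 ≤ (P {ω | η' ≤ |X k ω - X₀ ω|}).toReal := by
    intro k hk
    by_contra hc
    push_neg at hc
    set c : ℝ := (P {ω | η' ≤ |X k ω - X₀ ω|}).toReal with hcdef
    have h1 : (P {ω | X k ω ≤ x}).toReal ≤ F (x + η') + c := by
      refine toReal_measure_le_add P ?_
      intro ω hω
      simp only [Set.mem_setOf_eq] at hω ⊢
      by_cases hcase : X₀ ω ≤ x + η'
      · exact Or.inl hcase
      · refine Or.inr ?_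
        push_neg at hcase
        have : η' ≤ X₀ ω - X k ω := by linarith
        calc η' ≤ X₀ ω - X k ω := this
          _ ≤ |X₀ ω - X k ω| := le_abs_self _
          _ = |X k ω - X₀ ω| := abs_sub_comm _ _
    have h2 : F (x - η') ≤ (P {ω | X k ω ≤ x}).toReal + c := by
      refine toReal_measure_le_add P ?_
      intro ω hω
      simp only [Set.mem_setOf_eq] at hω ⊢
      by_cases hcase : X k ω ≤ x
      · exact Or.inl hcase
      · refine Or.inr ?_
        push_neg at hcase
        have : η' ≤ X k ω - X₀ ω := by linarith
        calc η' ≤ X k ω - X₀ ω := this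
          _ ≤ |X k ω - X₀ ω| := le_abs_self _
    have habs1 : F (x + η') - F x < ε / 4 := (le_abs_self _).trans_lt hplus
    have habs2 : F x - F (x - η') < ε / 4 := by
      have := (neg_le_abs _).trans_lt hminus; linarith
    have : |(P {ω | X k ω ≤ x}).toReal - F x| < ε := by
      rw [abs_sub_lt_iff]; constructor <;> linarith
    linarith
  -- apply the hypothesis and squeeze
  have hlim := h η' hη'0 (ε / 2) (by positivity)
  refine squeeze_zero (fun n => div_nonneg (Nat.cast_nonneg _) (Real.rpow_nonneg (by nlinarith [hab.2.2.1 n, hab.2.2.2.1 n]) _)) (fun n => ?_) hlim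
  have hden : (0:ℝ) < (b n - a n + 1) ^ γ := by
    have := (hab.2.2.1 n).trans_le (hab.2.2.2.1 n)
    have h0 : 0 < a n := hab.2.2.1 n
    have h1 : a n ≤ b n := hab.2.2.2.1 n
    exact Real.rpow_pos_of_pos (by linarith) γ
  apply div_le_div_of_nonneg_right ?_ hden.le |>.trans_eq rfl
  · exact Nat.cast_le.2 <| Set.ncard_le_ncard
      (fun k hk => ⟨hk.1, hk.2.1, key k hk.2.2⟩)
      (Set.Finite.subset (Set.finite_Iic ⌊b n⌋₊)
        (fun k hk => Set.mem_Iic.2 (Nat.le_floor hk.2.1)))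
end

section
/- Let α = {α_n} and β = {β_n} be two increasing sequences of positive real numbers with α_n ≤ β_n ≤ α_{n+1} ≤ β_{n+1} for all n ∈ ℕ and β_n − α_n → ∞ as n → ∞, let 0 < γ₁ ≤ γ₂ ≤ 1, and suppose liminf_{n→∞} (β_n / α_n) > 1. Then for any probability space (S, Δ, P) and any sequence {X_n} of real-valued random variables on S, X_n →^{PS^{γ₁}} X implies X_n →^{DS_{αβ}^{γ₂}} X. -/
open MeasureTheory Filter Set

lemma meas_toReal_le {Ω : Type*} [MeasurableSpace Ω] (P : Measure Ω) [IsProbabilityMeasure P]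
    {A B C : Set Ω} (h : A ⊆ B ∪ C) :
    (P A).toReal ≤ (P B).toReal + (P C).toReal := by
  have h1 : P A ≤ P B + P C := (measure_mono h).trans (measure_union_le _ _)
  have h2 := ENNReal.toReal_mono (by finiteness) h1
  rwa [ENNReal.toReal_add (measure_ne_top _ _) (measure_ne_top _ _)] at h2

lemma densityA (a b : ℕ → ℝ) (hapos : ∀ n, 0 < a n) (h1 : ∀ n, a n ≤ b n)
    (hdiv : Tendsto (fun n => b n - a n) atTop atTop)
    (hliminf : 1 < Filter.liminf (fun n => b n / a n) atTop)
    (γ₁ γ₂ : ℝ) (hγ₁0 : 0 < γ₁) (h12 : γ₁ ≤ γ₂)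
    (K : ℕ → Prop)
    (h0 : Tendsto (fun N : ℕ =>
        ((abIdx (fun _ => 1) (fun m => (m : ℝ)) N K).ncard : ℝ) / ((N : ℝ) - 1 + 1) ^ γ₁)
      atTop (nhds 0)) :
    Tendsto (fun n => ((abIdx a b n K).ncard : ℝ) / (b n - a n + 1) ^ γ₂)
      atTop (nhds 0) := by
  simp only [sub_add_cancel] at h0
  -- b tends to infinity
  have hbtop : Tendsto b atTop atTop := by
    apply tendsto_atTop_mono (fun n => ?_) hdiv
    have := (hapos n).le; linarith
  set N : ℕ → ℕ := fun n => ⌊b n⌋₊ with hNdef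
  have hN : Tendsto N atTop atTop := tendsto_nat_floor_atTop.comp hbtop
  have h0N := h0.comp hN
  -- pick c with 1 < c < liminf
  set L := Filter.liminf (fun n => b n / a n) atTop with hL
  set c : ℝ := (1 + L) / 2 with hc
  have hc1 : 1 < c := by simp only [hc]; linarith
  have hcL : c < L := by simp only [hc]; linarith
  have hbound : IsBoundedUnder (· ≥ ·) atTop (fun n => b n / a n) := by
    refine ⟨1, eventually_map.2 (Eventually.of_forall fun n => ?_)⟩
    show b n / a n ≥ 1
    rw [ge_iff_le, le_div_iff₀ (hapos n)]; simpa using h1 n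
  have hec : ∀ᶠ n in atTop, c < b n / a n := eventually_lt_of_lt_liminf hcL hbound
  have he1 : ∀ᶠ n in atTop, (1 : ℝ) ≤ b n := hbtop.eventually_ge_atTop 1
  set M : ℝ := (c / (c - 1)) ^ γ₁ with hM
  have hMg : Tendsto (fun n =>
      M * (((abIdx (fun _ => 1) (fun m => (m : ℝ)) (N n) K).ncard : ℝ) / ((N n : ℝ)) ^ γ₁))
      atTop (nhds 0) := by
    have := h0N.const_mul M
    simpa using this
  apply squeeze_zero' ?_ ?_ hMg
  · filter_upwards with n
    have hd : (0:ℝ) < b n - a n + 1 := by have := h1 n; linarith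
    positivity
  · filter_upwards [hec, he1] with n hnc hn1
    have hd0 : (0:ℝ) < b n - a n + 1 := by have := h1 n; linarith
    have hd1 : (1:ℝ) ≤ b n - a n + 1 := by have := h1 n; linarith
    have hb0 : (0:ℝ) ≤ b n := by linarith
    have hN1 : 1 ≤ N n := Nat.le_floor (by exact_mod_cast hn1)
    have hNR : (1:ℝ) ≤ (N n : ℝ) := by exact_mod_cast hN1
    have hNpos : (0:ℝ) < ((N n : ℝ)) ^ γ₁ := Real.rpow_pos_of_pos (by linarith) _
    have hd1pos : (0:ℝ) < (b n - a n + 1) ^ γ₁ := Real.rpow_pos_of_pos hd0 _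
    have hd2pos : (0:ℝ) < (b n - a n + 1) ^ γ₂ := Real.rpow_pos_of_pos hd0 _
    set cardA : ℝ := ((abIdx a b n K).ncard : ℝ)
    set cardB : ℝ := ((abIdx (fun _ => 1) (fun m => (m : ℝ)) (N n) K).ncard : ℝ) with hcB
    have hsub : abIdx a b n K ⊆ abIdx (fun _ => 1) (fun m => (m : ℝ)) (N n) K := by
      rintro k ⟨hk1, hk2, hk3⟩
      refine ⟨?_, ?_, hk3⟩
      · have hk0 : 0 < (k : ℝ) := lt_of_lt_of_le (hapos n) hk1
        have hk0' : 0 < k := by exact_mod_cast hk0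
        show (1:ℝ) ≤ (k:ℝ)
        exact_mod_cast hk0'
      · show (k:ℝ) ≤ ((N n : ℕ) : ℝ)
        exact_mod_cast Nat.le_floor hk2
    have hcard : cardA ≤ cardB :=
      Nat.cast_le.2 (Set.ncard_le_ncard hsub (abIdx_finite _ _ _ _))
    have hcB0 : 0 ≤ cardB := by positivity
    -- key rpow chain
    have hca : c * a n < b n := (lt_div_iff₀ (hapos n)).1 hnc
    have hratio : b n / (b n - a n + 1) ≤ c / (c - 1) := by
      rw [div_le_div_iff₀ hd0 (by linarith)]
      nlinarith [(hapos n).le]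
    have h8 : (b n / (b n - a n + 1)) ^ γ₁ ≤ M :=
      Real.rpow_le_rpow (by positivity) hratio hγ₁0.le
    have h7 : (b n) ^ γ₁ = (b n / (b n - a n + 1)) ^ γ₁ * (b n - a n + 1) ^ γ₁ := by
      rw [← Real.mul_rpow (by positivity) hd0.le, div_mul_cancel₀ _ hd0.ne']
    have h6 : ((N n : ℝ)) ^ γ₁ ≤ (b n) ^ γ₁ :=
      Real.rpow_le_rpow (by linarith) (Nat.floor_le hb0) hγ₁0.le
    have hNM : ((N n : ℝ)) ^ γ₁ ≤ M * (b n - a n + 1) ^ γ₁ := by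
      calc ((N n : ℝ)) ^ γ₁ ≤ (b n) ^ γ₁ := h6
        _ = (b n / (b n - a n + 1)) ^ γ₁ * (b n - a n + 1) ^ γ₁ := h7
        _ ≤ M * (b n - a n + 1) ^ γ₁ := by gcongr
    have hexp : (b n - a n + 1) ^ γ₁ ≤ (b n - a n + 1) ^ γ₂ :=
      Real.rpow_le_rpow_of_exponent_le hd1 h12
    calc cardA / (b n - a n + 1) ^ γ₂
        ≤ cardB / (b n - a n + 1) ^ γ₂ := by gcongr
      _ ≤ cardB / (b n - a n + 1) ^ γ₁ := by gcongr
      _ ≤ M * (cardB / ((N n : ℝ)) ^ γ₁) := by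
          rw [← mul_div_assoc, div_le_div_iff₀ hd1pos hNpos]
          calc cardB * (N n : ℝ) ^ γ₁ ≤ cardB * (M * (b n - a n + 1) ^ γ₁) := by gcongr
            _ = M * cardB * (b n - a n + 1) ^ γ₁ := by ring

/-- Theorem 4.3: for increasing sequences with `α_n ≤ β_n ≤ α_{n+1} ≤ β_{n+1}`,
`β_n − α_n → ∞` and `liminf (β_n / α_n) > 1`, statistical convergence of order γ₁ in
probability implies αβ-statistical convergence of order γ₂ in distribution. -/
theorem PS_implies_DSab {Ω : Type*} [MeasurableSpace Ω]
    (P : Measure Ω) [IsProbabilityMeasure P]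
    (a b : ℕ → ℝ) (ha : StrictMono a) (hb : StrictMono b)
    (hapos : ∀ n, 0 < a n) (h1 : ∀ n, a n ≤ b n) (h2 : ∀ n, b n ≤ a (n + 1))
    (hdiv : Tendsto (fun n => b n - a n) atTop atTop)
    (hliminf : 1 < Filter.liminf (fun n => b n / a n) atTop)
    (γ₁ γ₂ : ℝ) (hγ₁0 : 0 < γ₁) (h12 : γ₁ ≤ γ₂) (hγ₂1 : γ₂ ≤ 1)
    (X : ℕ → Ω → ℝ) (X₀ : Ω → ℝ)
    (hX : ∀ n, Measurable (X n)) (hX₀ : Measurable X₀)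
    (h : PSConv P (fun _ => 1) (fun n => (n : ℝ)) γ₁ X X₀) :
    DSConv P a b γ₂ X X₀ := by
  intro x hcont η hη
  -- choose ε' from continuity of F at x
  rw [Metric.continuousAt_iff] at hcont
  obtain ⟨δ', hδ'pos, hδ'⟩ := hcont (η / 4) (by positivity)
  set ε' : ℝ := δ' / 2 with hε'def
  have hε'pos : 0 < ε' := by positivity
  set F : ℝ → ℝ := fun t => (P {ω | X₀ ω ≤ t}).toReal with hF
  have hc1 : |F (x + ε') - F x| < η / 4 := by
    have : dist (x + ε') x < δ' := by
      rw [Real.dist_eq]; rw [show x + ε' - x = ε' by ring, abs_of_pos hε'pos]; linarith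
    simpa [Real.dist_eq] using hδ' this
  have hc2 : |F (x - ε') - F x| < η / 4 := by
    have : dist (x - ε') x < δ' := by
      rw [Real.dist_eq]; rw [show x - ε' - x = -ε' by ring, abs_neg, abs_of_pos hε'pos]
      linarith
    simpa [Real.dist_eq] using hδ' this
  rw [abs_lt] at hc1 hc2
  set Q : ℕ → ℝ := fun k => (P {ω | ε' ≤ |X k ω - X₀ ω|}).toReal with hQ
  -- pointwise claim
  have claim : ∀ k, ¬ (η / 2 ≤ Q k) → |(P {ω | X k ω ≤ x}).toReal - F x| < η := by
    intro k hk
    push_neg at hk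
    have A1 : {ω | X k ω ≤ x} ⊆ {ω | X₀ ω ≤ x + ε'} ∪ {ω | ε' ≤ |X k ω - X₀ ω|} := by
      intro ω hω
      by_cases habs : ε' ≤ |X k ω - X₀ ω|
      · exact Or.inr habs
      · left
        push_neg at habs
        rw [abs_lt] at habs
        simp only [Set.mem_setOf_eq] at hω ⊢
        linarith [habs.1]
    have A2 : {ω | X₀ ω ≤ x - ε'} ⊆ {ω | X k ω ≤ x} ∪ {ω | ε' ≤ |X k ω - X₀ ω|} := by
      intro ω hω
      by_cases habs : ε' ≤ |X k ω - X₀ ω|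
      · exact Or.inr habs
      · left
        push_neg at habs
        rw [abs_lt] at habs
        simp only [Set.mem_setOf_eq] at hω ⊢
        linarith [habs.2]
    have hu := meas_toReal_le P A1
    have hl := meas_toReal_le P A2
    rw [abs_lt]
    constructor <;> [skip; skip]
    · have : F (x - ε') ≤ (P {ω | X k ω ≤ x}).toReal + Q k := hl
      have h2 : F x - η / 4 < F (x - ε') := by linarith [hc2.1]
      linarith
    · have : (P {ω | X k ω ≤ x}).toReal ≤ F (x + ε') + Q k := hu
      have h2 : F (x + ε') < F x + η / 4 := by linarith [hc1.2]
      linarith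
  -- reduce to density of the bad set
  have hK := densityA a b hapos h1 hdiv hliminf γ₁ γ₂ hγ₁0 h12
    (fun k => η / 2 ≤ Q k) (h ε' hε'pos (η / 2) (by positivity))
  apply squeeze_zero' ?_ ?_ hK
  · filter_upwards with n
    have hd : (0:ℝ) < b n - a n + 1 := by have := h1 n; linarith
    positivity
  · filter_upwards with n
    have hd : (0:ℝ) < b n - a n + 1 := by have := h1 n; linarith
    have hd2 : (0:ℝ) < (b n - a n + 1) ^ γ₂ := Real.rpow_pos_of_pos hd _
    have hsub : (abIdx a b n fun k => η ≤ |(P {ω | X k ω ≤ x}).toReal - F x|) ⊆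
        abIdx a b n fun k => η / 2 ≤ Q k := by
      rintro k ⟨hk1, hk2, hk3⟩
      refine ⟨hk1, hk2, ?_⟩
      by_contra hcon
      exact absurd hk3 (not_le.2 (claim k hcon))
    have hcard : ((abIdx a b n fun k => η ≤ |(P {ω | X k ω ≤ x}).toReal - F x|).ncard : ℝ) ≤
        ((abIdx a b n fun k => η / 2 ≤ Q k).ncard : ℝ) :=
      Nat.cast_le.2 (Set.ncard_le_ncard hsub (abIdx_finite _ _ _ _))
    gcongr
end
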